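/- The following explicit trio is a self-similarly collapsing point vortex configuration: with circulations γ₁ = 1, γ₂ = 2, γ₃ = −2/3, centers w₁ = −2 + (2/√7)i, w₂ = 1 + (2/√7)i, w₃ = (9/√7)i, and 𝛀 = (35 − √7·i)/(264π), one has 𝒱_k(Λ) = 0 for each k = 1, 2, 3, i.e. Σ_{j≠k} γ_j/(2πi (w_k − w_j)) + i𝛀·conj(w_k) = 0. -/

import Mathlib

open Real Complex ComplexConjugate

/-- First vortex center of the collapsing trio: `w₁ = −2 + (2/√7)i`. -/
noncomputable def w₁ : ℂ := -2 + (2 / (Real.sqrt 7 : ℂ)) * I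

/-- Second vortex center of the collapsing trio: `w₂ = 1 + (2/√7)i`. -/
noncomputable def w₂ : ℂ := 1 + (2 / (Real.sqrt 7 : ℂ)) * I

/-- Third vortex center of the collapsing trio: `w₃ = (9/√7)i`. -/
noncomputable def w₃ : ℂ := (9 / (Real.sqrt 7 : ℂ)) * I

/-- The complex parameter `𝛀 = Ω − i/(2κ) = (35 − √7 i)/(264π)` of the collapsing trio. -/
noncomputable def OmTrio : ℂ := (35 - (Real.sqrt 7 : ℂ) * I) / (264 * (π : ℂ))

/-- **Gröbli's collapsing trio, normalized to collapse at the origin, is a self-similarly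
collapsing point vortex configuration.**  With circulations `γ₁ = 1`, `γ₂ = 2`,
`γ₃ = −2/3`, centers `w₁ = −2 + (2/√7)i`, `w₂ = 1 + (2/√7)i`, `w₃ = (9/√7)i`, and
`𝛀 = (35 − √7 i)/(264π)`, one has `𝒱_k(Λ) = 0` for each `k = 1, 2, 3`, i.e.
`Σ_{j≠k} γ_j/(2πi (w_k − w_j)) + i𝛀·conj(w_k) = 0`. -/
theorem collapsing_point_vortex_trio :
    ((2 : ℂ) / (2 * (π : ℂ) * I * (w₁ - w₂))
        + (-(2/3) : ℂ) / (2 * (π : ℂ) * I * (w₁ - w₃)) + I * OmTrio * conj w₁ = 0) ∧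
    ((1 : ℂ) / (2 * (π : ℂ) * I * (w₂ - w₁))
        + (-(2/3) : ℂ) / (2 * (π : ℂ) * I * (w₂ - w₃)) + I * OmTrio * conj w₂ = 0) ∧
    ((1 : ℂ) / (2 * (π : ℂ) * I * (w₃ - w₁))
        + (2 : ℂ) / (2 * (π : ℂ) * I * (w₃ - w₂)) + I * OmTrio * conj w₃ = 0) := by
  set s : ℂ := ((Real.sqrt 7 : ℝ) : ℂ) with hsdef
  have hs : s ^ 2 = 7 := by
    rw [hsdef, ← Complex.ofReal_pow, Real.sq_sqrt (by norm_num : (7:ℝ) ≥ 0)]; norm_num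
  have hs0 : s ≠ 0 := by intro h; rw [h] at hs; norm_num at hs
  have hpi : ((Real.pi : ℝ) : ℂ) ≠ 0 := by exact_mod_cast Real.pi_ne_zero
  have hI := Complex.I_sq
  have h7 : Real.sqrt 7 ≠ 0 := Real.sqrt_ne_zero'.mpr (by norm_num)
  have h12 : w₁ - w₂ = -3 := by simp [w₁, w₂]; ring
  have h13 : w₁ - w₃ = -2 - s * I := by
    simp only [w₁, w₃, ← hsdef]; field_simp; linear_combination I * hs
  have h21 : w₂ - w₁ = 3 := by simp [w₁, w₂]; ring
  have h23 : w₂ - w₃ = 1 - s * I := by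
    simp only [w₂, w₃, ← hsdef]; field_simp; linear_combination I * hs
  have h31 : w₃ - w₁ = 2 + s * I := by
    simp only [w₁, w₃, ← hsdef]; field_simp; linear_combination (-I) * hs
  have h32 : w₃ - w₂ = -1 + s * I := by
    simp only [w₂, w₃, ← hsdef]; field_simp; linear_combination (-I) * hs
  have hc1 : conj w₁ = -2 - (2 / s) * I := by
    simp only [w₁, map_add, map_mul, map_div₀, map_neg, map_ofNat,
      Complex.conj_I, Complex.conj_ofReal]; rw [← hsdef]; ring
  have hc2 : conj w₂ = 1 - (2 / s) * I := by
    simp only [w₂, map_add, map_mul, map_div₀, map_one, map_ofNat,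
      Complex.conj_I, Complex.conj_ofReal]; rw [← hsdef]; ring
  have hc3 : conj w₃ = -(9 / s) * I := by
    simp only [w₃, map_mul, map_div₀, map_ofNat,
      Complex.conj_I, Complex.conj_ofReal]; rw [← hsdef]; ring
  have ha : (-2 - s * I) ≠ 0 := by
    intro h; have := congrArg Complex.im h; simp [hsdef, h7] at this
  have hb : (1 - s * I) ≠ 0 := by
    intro h; have := congrArg Complex.im h; simp [hsdef, h7] at this
  have hcc : (2 + s * I) ≠ 0 := by
    intro h; have := congrArg Complex.im h; simp [hsdef, h7] at this
  have hdd : (-1 + s * I) ≠ 0 := by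
    intro h; have := congrArg Complex.im h; simp [hsdef, h7] at this
  have hA : (2*(π:ℂ)*I*(-2 - s*I)) ≠ 0 := by
    exact mul_ne_zero (mul_ne_zero (mul_ne_zero two_ne_zero hpi) Complex.I_ne_zero) ha
  have hB : (2*(π:ℂ)*I*(1 - s*I)) ≠ 0 := by
    exact mul_ne_zero (mul_ne_zero (mul_ne_zero two_ne_zero hpi) Complex.I_ne_zero) hb
  have hC : (2*(π:ℂ)*I*(2 + s*I)) ≠ 0 := by
    exact mul_ne_zero (mul_ne_zero (mul_ne_zero two_ne_zero hpi) Complex.I_ne_zero) hcc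
  have hD : (2*(π:ℂ)*I*(-1 + s*I)) ≠ 0 := by
    exact mul_ne_zero (mul_ne_zero (mul_ne_zero two_ne_zero hpi) Complex.I_ne_zero) hdd
  have t1 : (2:ℂ)/(2*(π:ℂ)*I*(-3:ℂ)) = I/(3*(π:ℂ)) := by
    rw [div_eq_div_iff (by simp [hpi, Complex.I_ne_zero]) (by simp [hpi])]
    linear_combination (6*(π:ℂ)) * hI
  have t2 : (-(2/3):ℂ)/(2*(π:ℂ)*I*(-2 - s*I)) = (-s - 2*I)/(33*(π:ℂ)) := by
    rw [div_eq_div_iff hA (by simp [hpi])]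
    linear_combination (2*(π:ℂ))*hs + (-4*(π:ℂ)*s*I - 2*(π:ℂ)*s^2 - 8*(π:ℂ))*hI
  have t3 : I * ((35 - s*I)/(264*(π:ℂ))) * (-2 - 2/s*I) = (s - 9*I)/(33*(π:ℂ)) := by
    field_simp
    linear_combination (-330)*hs + (66*s^2 - 2310 + 66*s*I)*hI
  have u1 : (1:ℂ)/(2*(π:ℂ)*I*(3:ℂ)) = -I/(6*(π:ℂ)) := by
    rw [div_eq_div_iff (by simp [hpi, Complex.I_ne_zero]) (by simp [hpi])]
    linear_combination (6*(π:ℂ))*hI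
  have u2 : (-(2/3):ℂ)/(2*(π:ℂ)*I*(1 - s*I)) = (-s + I)/(24*(π:ℂ)) := by
    rw [div_eq_div_iff hB (by simp [hpi])]
    linear_combination (2*(π:ℂ))*hs + (2*(π:ℂ)*s*I - 2*(π:ℂ)*s^2 - 2*(π:ℂ))*hI
  have u3 : I * ((35 - s*I)/(264*(π:ℂ))) * (1 - 2/s*I) = (s + 3*I)/(24*(π:ℂ)) := by
    field_simp
    linear_combination (-240)*hs + (-24*s^2 - 1680 + 48*s*I)*hI
  have v1 : (1:ℂ)/(2*(π:ℂ)*I*(2 + s*I)) = (-s - 2*I)/(22*(π:ℂ)) := by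
    rw [div_eq_div_iff hC (by simp [hpi])]
    linear_combination (-2*(π:ℂ))*hs + (4*(π:ℂ)*s*I + 2*(π:ℂ)*s^2 + 8*(π:ℂ))*hI
  have v2 : (2:ℂ)/(2*(π:ℂ)*I*(-1 + s*I)) = (-s + I)/(8*(π:ℂ)) := by
    rw [div_eq_div_iff hD (by simp [hpi])]
    linear_combination (-2*(π:ℂ))*hs + (-2*(π:ℂ)*s*I + 2*(π:ℂ)*s^2 + 2*(π:ℂ))*hI
  have v3 : I * ((35 - s*I)/(264*(π:ℂ))) * (-(9/s)*I) = (15*s - 3*I)/(88*(π:ℂ)) := by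
    field_simp
    linear_combination (-3960)*hs + (-27720 + 792*s*I)*hI
  refine ⟨?_, ?_, ?_⟩
  · rw [h12, h13, hc1, OmTrio, ← hsdef, t1, t2, t3]
    field_simp
    ring
  · rw [h21, h23, hc2, OmTrio, ← hsdef, u1, u2, u3]
    field_simp
    ring
  · rw [h31, h32, hc3, OmTrio, ← hsdef, v1, v2, v3]
    field_simp
    ring
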